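/- arXiv:math/0504074 — 2 statements merged into one kernel-verified Lean document; each statement's English description precedes it below -/
import Mathlib

section
/- Let F be a field of characteristic zero and let q ∈ F be nonzero. Assume q is not a root of unity (i.e., q^n ≠ 1 for every integer n ≥ 1). If p is a nonconstant prime element of the quantum plane O_q(F²), then p is a scalar multiple of x or a scalar multiple of y, i.e., there exists λ ∈ F with p = λ·x or p = λ·y. -/
noncomputable section

/-- The defining relation of the quantum plane: `y * x = q • (x * y)`. -/
inductive QRel (F : Type) [Field F] (q : F) :
    FreeAlgebra F (Fin 2) → FreeAlgebra F (Fin 2) → Prop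
  | rel : QRel F q (FreeAlgebra.ι F 1 * FreeAlgebra.ι F 0)
      (q • (FreeAlgebra.ι F 0 * FreeAlgebra.ι F 1))

/-- The quantum plane `O_q(F²)`. -/
abbrev QPlane (F : Type) [Field F] (q : F) : Type := RingQuot (QRel F q)

/-- The generator `x` of the quantum plane. -/
def Qx (F : Type) [Field F] (q : F) : QPlane F q :=
  RingQuot.mkAlgHom F (QRel F q) (FreeAlgebra.ι F 0)

/-- The generator `y` of the quantum plane. -/
def Qy (F : Type) [Field F] (q : F) : QPlane F q :=
  RingQuot.mkAlgHom F (QRel F q) (FreeAlgebra.ι F 1)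

/-- `r` divides `s` if `s = r·t` or `s = t·r` for some `t`. -/
def EltDvd {R : Type} [Ring R] (r s : R) : Prop :=
  ∃ t : R, s = r * t ∨ s = t * r

/-- `r` is prime if `r ∣ s·t` implies `r ∣ s` or `r ∣ t`. -/
def IsPrimeElt {R : Type} [Ring R] (r : R) : Prop :=
  ∀ s t : R, EltDvd r (s * t) → EltDvd r s ∨ EltDvd r t

/-- An element of the quantum plane is constant if it is in the image of the
structure map `F → O_q(F²)`. -/
def IsConstQP (F : Type) [Field F] (q : F) (f : QPlane F q) : Prop :=
  f ∈ Set.range (algebraMap F (QPlane F q))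

/-!
Write elements of `O_q(F²)` in the monomial basis `xᵃ yᵇ` (independent because the left regular
representation sends `xᵃ yᵇ` to the basis vector at `(a, b)`) and order exponents lexicographically.
For `q ≠ 0` the leading exponent is additive under multiplication, so a divisor of `b` has leading
exponent at most that of `b`, and a divisor with the same leading exponent differs from `b` by a
scalar. A prime `p` divides `p x = x σ(p)` and `y p = τ(p) y`, where `σ` and `τ` rescale `y` and
`x` by `q`; so either `p` divides a generator, or `σ(p)` and `τ(p)` are scalar multiples of `p`.
In the latter case, since `q` is not a root of unity, `p` is a single monomial `c xᵃ yᵇ`, and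
primality forces `(a, b)` to be `(1, 0)` or `(0, 1)`.
-/

theorem pow_mul_pow_eq_smul_of_mul_eq_smul {R A : Type*} [CommSemiring R] [Semiring A] [Algebra R A]
    {a b : A} {q : R} (h : b * a = q • (a * b)) (m n : ℕ) :
    b ^ m * a ^ n = q ^ (m * n) • (a ^ n * b ^ m) := by
  have hb : ∀ m : ℕ, b ^ m * a = q ^ m • (a * b ^ m) := by
    intro m
    induction m with
    | zero => simp
    | succ m ih =>
      rw [pow_succ, mul_assoc, h, mul_smul_comm, ← mul_assoc, ih, smul_mul_assoc, smul_smul,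
        mul_assoc, ← pow_succ, ← pow_succ']
  induction n with
  | zero => simp
  | succ n ih =>
    rw [pow_succ, ← mul_assoc, ih, smul_mul_assoc, mul_assoc, hb, mul_smul_comm, smul_smul,
      ← pow_add, ← mul_assoc, Nat.mul_succ]

theorem Prod.eq_one_zero_or_eq_zero_one_of_forall_add_eq {M : ℕ × ℕ} (hM : M ≠ 0)
    (h : ∀ u v, u + v = M → M ≤ u ∨ M ≤ v) : M = (1, 0) ∨ M = (0, 1) := by
  obtain ⟨m, n⟩ := M
  have hsplit := h (m, 0) (0, n) (by simp)
  have hunit := h (min m 1, min n 1) (m - min m 1, n - min n 1) (by ext <;> simp)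
  simp only [ne_eq, Prod.mk_eq_zero, Prod.mk_le_mk, Prod.mk.injEq] at hM hsplit hunit ⊢
  omega

theorem injective_pow_of_pow_ne_one {K : Type*} [GroupWithZero K] {q : K} (hq : q ≠ 0)
    (hroot : ∀ n : ℕ, 1 ≤ n → q ^ n ≠ 1) : Function.Injective (q ^ · : ℕ → K) := by
  have hinj : Function.Injective ((Units.mk0 q hq) ^ · : ℕ → Kˣ) := by
    refine injective_pow_iff_not_isOfFinOrder.2 fun hfin => ?_
    obtain ⟨n, hn, hpow⟩ := isOfFinOrder_iff_pow_eq_one.1 hfin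
    exact hroot n hn (by simpa using congrArg Units.val hpow)
  exact fun m n h => hinj (Units.ext (by simpa using h))

namespace QPlane

variable {F : Type} [Field F] {q : F}

theorem Qy_mul_Qx : Qy F q * Qx F q = q • (Qx F q * Qy F q) := by
  simpa [Qx, Qy] using RingQuot.mkAlgHom_rel F (QRel.rel (F := F) (q := q))

section Lift

variable {A : Type*} [Semiring A] [Algebra F A]

def lift (a b : A) (h : b * a = q • (a * b)) : QPlane F q →ₐ[F] A :=
  RingQuot.liftAlgHom F ⟨FreeAlgebra.lift F ![a, b], by
    rintro _ _ ⟨⟩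
    simpa using h⟩

variable {a b : A} {h : b * a = q • (a * b)}

@[simp]
theorem lift_Qx : lift a b h (Qx F q) = a := by
  simp [lift, Qx]

@[simp]
theorem lift_Qy : lift a b h (Qy F q) = b := by
  simp [lift, Qy]

theorem algHom_ext {f g : QPlane F q →ₐ[F] A} (hx : f (Qx F q) = g (Qx F q))
    (hy : f (Qy F q) = g (Qy F q)) : f = g :=
  RingQuot.ringQuot_ext' _ _ _ <| FreeAlgebra.hom_ext <| funext <| Fin.forall_fin_two.2 ⟨hx, hy⟩

end Lift

variable (F q) in
def monomial (e : ℕ × ℕ) : QPlane F q := Qx F q ^ e.1 * Qy F q ^ e.2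

@[simp]
theorem monomial_zero : monomial F q 0 = 1 := by simp [monomial]

@[simp]
theorem monomial_one_zero : monomial F q (1, 0) = Qx F q := by simp [monomial]

@[simp]
theorem monomial_zero_one : monomial F q (0, 1) = Qy F q := by simp [monomial]

theorem monomial_mul_monomial (e f : ℕ × ℕ) :
    monomial F q e * monomial F q f = q ^ (e.2 * f.1) • monomial F q (e + f) := by
  rw [monomial, monomial, mul_assoc, ← mul_assoc (Qy F q ^ e.2),
    pow_mul_pow_eq_smul_of_mul_eq_smul Qy_mul_Qx, smul_mul_assoc, mul_smul_comm, mul_assoc,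
    ← pow_add, ← mul_assoc, ← pow_add]
  rfl

section RegularRepresentation

open Finsupp

variable (F) in
def shiftX : Module.End F ((ℕ × ℕ) →₀ F) := linearCombination F fun e => single (e + (1, 0)) 1

variable (q) in
def shiftY : Module.End F ((ℕ × ℕ) →₀ F) :=
  linearCombination F fun e => single (e + (0, 1)) (q ^ e.1)

theorem shiftY_mul_shiftX : shiftY q * shiftX F = q • (shiftX F * shiftY q) := by
  ext e : 2
  simp [shiftX, shiftY, smul_single, add_right_comm e (1, 0), pow_succ', add_assoc]

theorem shiftX_pow_single (n : ℕ) (e : ℕ × ℕ) :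
    (shiftX F ^ n) (single e 1) = single (e + (n, 0)) 1 := by
  induction n generalizing e with
  | zero => rw [pow_zero, Module.End.one_apply, Prod.mk_zero_zero, add_zero]
  | succ n ih =>
    rw [pow_succ, Module.End.mul_apply, shiftX, linearCombination_single, one_smul, ← shiftX, ih,
      add_assoc, Prod.mk_add_mk (1 : ℕ) n 0, add_zero, add_comm 1 n]

theorem shiftY_pow_single (n j : ℕ) :
    (shiftY q ^ n) (single (0, j) 1) = single (0, j + n) 1 := by
  induction n generalizing j with
  | zero => simp
  | succ n ih =>
    rw [pow_succ, Module.End.mul_apply, shiftY, linearCombination_single, one_smul, ← shiftY,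
      pow_zero, Prod.mk_add_mk, add_zero, ih, add_assoc, add_comm 1 n]

variable (F q) in
/-- The left regular representation in the monomial basis: `y xᵃ yᵇ = qᵃ xᵃ yᵇ⁺¹`. -/
def regularRep : QPlane F q →ₐ[F] Module.End F ((ℕ × ℕ) →₀ F) :=
  lift (shiftX F) (shiftY q) shiftY_mul_shiftX

theorem regularRep_monomial_single_zero (e : ℕ × ℕ) :
    regularRep F q (monomial F q e) (single 0 1) = single e 1 := by
  rw [monomial, map_mul, map_pow, map_pow, regularRep, lift_Qx, lift_Qy, Module.End.mul_apply,
    ← Prod.mk_zero_zero, shiftY_pow_single, shiftX_pow_single, Prod.mk_add_mk]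
  simp

theorem linearIndependent_monomial : LinearIndependent F (monomial F q) := by
  refine .of_comp (LinearMap.applyₗ (single 0 1) ∘ₗ (regularRep F q).toLinearMap) ?_
  convert linearIndependent_single_one F (ℕ × ℕ) with e
  exact regularRep_monomial_single_zero e

end RegularRepresentation

theorem span_range_monomial : Submodule.span F (Set.range (monomial F q)) = ⊤ := by
  set S := Submodule.span F (Set.range (monomial F q))
  have hmul : S * S ≤ S := by
    rw [Submodule.span_mul_span, Submodule.span_le]
    rintro _ ⟨_, ⟨e, rfl⟩, _, ⟨f, rfl⟩, rfl⟩
    change monomial F q e * monomial F q f ∈ S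
    rw [monomial_mul_monomial]
    exact S.smul_mem _ (Submodule.subset_span ⟨_, rfl⟩)
  let T := S.toSubalgebra (monomial_zero (F := F) (q := q) ▸ Submodule.subset_span ⟨0, rfl⟩)
    fun a b ha hb => hmul (Submodule.mul_mem_mul ha hb)
  have hx : Qx F q ∈ T := monomial_one_zero (F := F) (q := q) ▸ Submodule.subset_span ⟨_, rfl⟩
  have hy : Qy F q ∈ T := monomial_zero_one (F := F) (q := q) ▸ Submodule.subset_span ⟨_, rfl⟩
  let L : QPlane F q →ₐ[F] T := lift ⟨_, hx⟩ ⟨_, hy⟩ (Subtype.ext Qy_mul_Qx)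
  have hL : T.val.comp L = AlgHom.id F _ := algHom_ext (by simp [L]) (by simp [L])
  refine eq_top_iff.2 fun a _ => ?_
  rw [← AlgHom.id_apply (R := F) a, ← hL]
  exact (L a).2

variable (F q) in
def monomialBasis : Module.Basis (ℕ × ℕ) F (QPlane F q) :=
  .mk linearIndependent_monomial span_range_monomial.ge

@[simp]
theorem monomialBasis_apply (e : ℕ × ℕ) : monomialBasis F q e = monomial F q e :=
  Module.Basis.mk_apply _ _ _

@[simp]
theorem monomialBasis_repr_monomial (e : ℕ × ℕ) :
    (monomialBasis F q).repr (monomial F q e) = Finsupp.single e 1 := by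
  rw [← monomialBasis_apply, Module.Basis.repr_self]

def coeff (a : QPlane F q) : (ℕ × ℕ) →₀ F := (monomialBasis F q).repr a

theorem coeff_injective : Function.Injective (coeff (F := F) (q := q)) :=
  (monomialBasis F q).repr.injective

theorem coeff_smul (c : F) (a : QPlane F q) : coeff (c • a) = c • coeff a :=
  map_smul _ c a

theorem coeff_monomial (e : ℕ × ℕ) : coeff (monomial F q e) = Finsupp.single e 1 := by
  rw [coeff, monomialBasis_repr_monomial]

theorem coeff_algebraMap (c : F) : coeff (algebraMap F (QPlane F q) c) = Finsupp.single 0 c := by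
  rw [Algebra.algebraMap_eq_smul_one, ← monomial_zero, coeff_smul, coeff_monomial,
    Finsupp.smul_single, smul_eq_mul, mul_one]

theorem coeff_mul (a b : QPlane F q) :
    coeff (a * b) = ∑ x ∈ (coeff a).support ×ˢ (coeff b).support,
      Finsupp.single (x.1 + x.2) (coeff a x.1 * coeff b x.2 * q ^ (x.1.2 * x.2.1)) := by
  conv_lhs => rw [← (monomialBasis F q).linearCombination_repr a,
    ← (monomialBasis F q).linearCombination_repr b]
  simp only [coeff, Finsupp.linearCombination_apply, Finsupp.sum, Finset.sum_mul_sum,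
    Finset.sum_product, monomialBasis_apply, smul_mul_smul_comm, monomial_mul_monomial, smul_smul,
    map_sum, map_smul, monomialBasis_repr_monomial, Finsupp.smul_single, smul_eq_mul, mul_one]

theorem support_coeff_mul_subset (a b : QPlane F q) :
    (coeff (a * b)).support ⊆
      ((coeff a).support ×ˢ (coeff b).support).image fun x => x.1 + x.2 := by
  intro e he
  rw [coeff_mul] at he
  obtain ⟨x, hx, hex⟩ := Finset.mem_biUnion.1 (Finsupp.support_finsetSum he)
  exact Finset.mem_image.2
    ⟨x, hx, (Finset.mem_singleton.1 (Finsupp.support_single_subset hex)).symm⟩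

/-- Lexicographically largest exponent of `a`; it is `0` for `a = 0`. -/
def leadExp (a : QPlane F q) : ℕ × ℕ := ofLex ((coeff a).support.sup toLex)

theorem toLex_le_toLex_leadExp {a : QPlane F q} {e : ℕ × ℕ} (he : e ∈ (coeff a).support) :
    toLex e ≤ toLex (leadExp a) :=
  Finset.le_sup (f := toLex) he

theorem leadExp_mem_support {a : QPlane F q} (ha : a ≠ 0) : leadExp a ∈ (coeff a).support := by
  have hne : (coeff a).support.Nonempty :=
    Finsupp.support_nonempty_iff.2 fun h => ha (coeff_injective (h.trans (map_zero _).symm))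
  obtain ⟨e, he, hsup⟩ := Finset.exists_mem_eq_sup _ hne toLex
  rwa [leadExp, hsup]

theorem leadExp_monomial (e : ℕ × ℕ) : leadExp (monomial F q e) = e := by
  simp [leadExp, coeff_monomial]

theorem leadExp_smul {c : F} (hc : c ≠ 0) (a : QPlane F q) : leadExp (c • a) = leadExp a := by
  rw [leadExp, leadExp, coeff_smul, Finsupp.support_smul_eq hc]

theorem eq_algebraMap_of_leadExp_eq_zero {a : QPlane F q} (ha : leadExp a = 0) :
    a = algebraMap F (QPlane F q) (coeff a 0) := by
  apply coeff_injective
  rw [coeff_algebraMap, ← Finsupp.support_subset_singleton]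
  intro e he
  have hle := toLex_le_toLex_leadExp he
  rw [ha] at hle
  exact Finset.mem_singleton.2 (toLex.injective (le_bot_iff.1 hle))

theorem coeff_mul_apply_leadExp_add (a b : QPlane F q) :
    coeff (a * b) (leadExp a + leadExp b) =
      coeff a (leadExp a) * coeff b (leadExp b) * q ^ ((leadExp a).2 * (leadExp b).1) := by
  rw [coeff_mul, Finsupp.finsetSum_apply, Finset.sum_eq_single (leadExp a, leadExp b)]
  · exact Finsupp.single_eq_same
  · rintro ⟨e, f⟩ hef hne
    obtain ⟨he, hf⟩ := Finset.mem_product.1 hef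
    refine Finsupp.single_eq_of_ne fun h => hne ?_
    obtain ⟨rfl, rfl⟩ := (add_eq_add_iff_eq_and_eq (toLex_le_toLex_leadExp he)
      (toLex_le_toLex_leadExp hf)).1 (congrArg toLex h.symm)
    rfl
  · intro h
    rw [Finsupp.single_eq_same]
    rcases not_and_or.1 (mt Finset.mem_product.2 h) with h | h <;>
      simp [Finsupp.notMem_support_iff.1 h]

theorem leadExp_mul (hq : q ≠ 0) {a b : QPlane F q} (ha : a ≠ 0) (hb : b ≠ 0) :
    leadExp (a * b) = leadExp a + leadExp b := by
  have hlead : coeff (a * b) (leadExp a + leadExp b) ≠ 0 := by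
    rw [coeff_mul_apply_leadExp_add]
    exact mul_ne_zero (mul_ne_zero (Finsupp.mem_support_iff.1 (leadExp_mem_support ha))
      (Finsupp.mem_support_iff.1 (leadExp_mem_support hb))) (pow_ne_zero _ hq)
  refine toLex.injective (le_antisymm (Finset.sup_le fun e he => ?_)
    (toLex_le_toLex_leadExp (Finsupp.mem_support_iff.2 hlead)))
  obtain ⟨x, hx, rfl⟩ := Finset.mem_image.1 (support_coeff_mul_subset a b he)
  obtain ⟨h1, h2⟩ := Finset.mem_product.1 hx
  exact add_le_add (toLex_le_toLex_leadExp h1) (toLex_le_toLex_leadExp h2)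

theorem exists_leadExp_eq_add_of_eltDvd (hq : q ≠ 0) {a b : QPlane F q} (h : EltDvd a b)
    (hb : b ≠ 0) : ∃ t, (b = a * t ∨ b = t * a) ∧ leadExp b = leadExp a + leadExp t := by
  obtain ⟨t, ht⟩ := h
  refine ⟨t, ht, ?_⟩
  rcases ht with rfl | rfl
  · exact leadExp_mul hq (left_ne_zero_of_mul hb) (right_ne_zero_of_mul hb)
  · rw [leadExp_mul hq (left_ne_zero_of_mul hb) (right_ne_zero_of_mul hb), add_comm]

theorem leadExp_le_of_eltDvd (hq : q ≠ 0) {a b : QPlane F q} (h : EltDvd a b) (hb : b ≠ 0) :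
    leadExp a ≤ leadExp b := by
  obtain ⟨t, -, ht⟩ := exists_leadExp_eq_add_of_eltDvd hq h hb
  exact ht ▸ le_self_add

theorem exists_eq_smul_of_eltDvd_of_leadExp_eq (hq : q ≠ 0) {a b : QPlane F q} (h : EltDvd a b)
    (hb : b ≠ 0) (he : leadExp b = leadExp a) : ∃ c : F, b = c • a := by
  obtain ⟨t, ht, hlead⟩ := exists_leadExp_eq_add_of_eltDvd hq h hb
  rw [he, left_eq_add] at hlead
  rw [eq_algebraMap_of_leadExp_eq_zero hlead, ← Algebra.commutes] at ht
  exact ⟨coeff t 0, by rcases ht with ht | ht <;> rw [ht, Algebra.smul_def]⟩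

theorem monomial_ne_zero (e : ℕ × ℕ) : monomial F q e ≠ 0 :=
  linearIndependent_monomial.ne_zero e

theorem exists_eq_smul_of_eltDvd_monomial (hq : q ≠ 0) {p : QPlane F q} (hp : leadExp p ≠ 0)
    {e : ℕ × ℕ} (he : e = (1, 0) ∨ e = (0, 1)) (h : EltDvd p (monomial F q e)) :
    ∃ c : F, p = c • monomial F q e := by
  have hle := leadExp_le_of_eltDvd hq h (monomial_ne_zero e)
  obtain ⟨c, hc⟩ := exists_eq_smul_of_eltDvd_of_leadExp_eq hq h (monomial_ne_zero e) <| by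
    rw [leadExp_monomial] at hle ⊢
    generalize leadExp p = M at hle hp ⊢
    obtain ⟨m, n⟩ := M
    rcases he with rfl | rfl <;>
      simp only [Prod.mk_le_mk, ne_eq, Prod.mk_eq_zero, Prod.mk.injEq] at hle hp ⊢ <;> omega
  have hc0 : c ≠ 0 := by
    rintro rfl
    exact monomial_ne_zero e (hc.trans (zero_smul F p))
  exact ⟨c⁻¹, by rw [hc, inv_smul_smul₀ hc0]⟩

section Scale

variable (α β : F)

def scale : QPlane F q →ₐ[F] QPlane F q :=
  lift (α • Qx F q) (β • Qy F q) <| by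
    rw [smul_mul_smul_comm, smul_mul_smul_comm, Qy_mul_Qx, smul_comm, mul_comm β]

theorem scale_monomial (e : ℕ × ℕ) :
    scale α β (monomial F q e) = (α ^ e.1 * β ^ e.2) • monomial F q e := by
  simp only [scale, monomial, map_mul, map_pow, lift_Qx, lift_Qy, smul_pow, smul_mul_smul_comm]

theorem coeff_scale (a : QPlane F q) (e : ℕ × ℕ) :
    coeff (scale α β a) e = α ^ e.1 * β ^ e.2 * coeff a e := by
  have h : (Finsupp.lapply e ∘ₗ (monomialBasis F q).repr.toLinearMap) ∘ₗ (scale α β).toLinearMap =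
      (α ^ e.1 * β ^ e.2) • (Finsupp.lapply e ∘ₗ (monomialBasis F q).repr.toLinearMap) :=
    (monomialBasis F q).ext fun f => by
      rcases eq_or_ne f e with rfl | hf <;> simp [scale_monomial, *]
  exact LinearMap.congr_fun h a

theorem mul_Qx (a : QPlane F q) : a * Qx F q = Qx F q * scale 1 q a := by
  have h : LinearMap.mulRight F (Qx F q) =
      LinearMap.mulLeft F (Qx F q) ∘ₗ (scale 1 q).toLinearMap :=
    (monomialBasis F q).ext fun e => by
      simp only [monomialBasis_apply, LinearMap.mulRight_apply, LinearMap.comp_apply,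
        AlgHom.toLinearMap_apply, LinearMap.mulLeft_apply, scale_monomial, mul_smul_comm,
        ← monomial_one_zero, monomial_mul_monomial, add_comm e, one_pow, one_mul, mul_one,
        zero_mul, pow_zero, one_smul]
  exact LinearMap.congr_fun h a

theorem Qy_mul (a : QPlane F q) : Qy F q * a = scale q 1 a * Qy F q := by
  have h : LinearMap.mulLeft F (Qy F q) =
      LinearMap.mulRight F (Qy F q) ∘ₗ (scale q 1).toLinearMap :=
    (monomialBasis F q).ext fun e => by
      simp only [monomialBasis_apply, LinearMap.mulRight_apply, LinearMap.comp_apply,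
        AlgHom.toLinearMap_apply, LinearMap.mulLeft_apply, scale_monomial, smul_mul_assoc,
        ← monomial_zero_one, monomial_mul_monomial, add_comm e, one_pow, one_mul, mul_one,
        mul_zero, pow_zero, one_smul]
  exact LinearMap.congr_fun h a

variable {α β}

theorem support_coeff_scale (hα : α ≠ 0) (hβ : β ≠ 0) (a : QPlane F q) :
    (coeff (scale α β a)).support = (coeff a).support := by
  ext e
  simp [coeff_scale, hα, hβ]

theorem pow_mul_pow_eq_of_eltDvd_scale (hq : q ≠ 0) (hα : α ≠ 0) (hβ : β ≠ 0) {a : QPlane F q}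
    (ha : a ≠ 0) (h : EltDvd a (scale α β a)) {e : ℕ × ℕ} (he : e ∈ (coeff a).support) :
    α ^ e.1 * β ^ e.2 = α ^ (leadExp a).1 * β ^ (leadExp a).2 := by
  have hs : scale α β a ≠ 0 := fun h0 => by
    have hmem := leadExp_mem_support ha
    rw [← support_coeff_scale hα hβ, h0, coeff, map_zero] at hmem
    exact Finsupp.notMem_support_iff.2 rfl hmem
  obtain ⟨c, hc⟩ := exists_eq_smul_of_eltDvd_of_leadExp_eq hq h hs <| by
    rw [leadExp, leadExp, support_coeff_scale hα hβ]
  have hchar : ∀ f ∈ (coeff a).support, α ^ f.1 * β ^ f.2 = c := fun f hf => by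
    have hcf := congrArg (coeff · f) hc
    simp only [coeff_scale, coeff_smul, Finsupp.smul_apply, smul_eq_mul] at hcf
    exact mul_right_cancel₀ (Finsupp.mem_support_iff.1 hf) hcf
  rw [hchar e he, hchar _ (leadExp_mem_support ha)]

end Scale

theorem eq_smul_monomial_leadExp_of_eltDvd_scale (hq : q ≠ 0)
    (hinj : Function.Injective (q ^ · : ℕ → F)) {a : QPlane F q} (ha : a ≠ 0)
    (hx : EltDvd a (scale 1 q a)) (hy : EltDvd a (scale q 1 a)) :
    a = coeff a (leadExp a) • monomial F q (leadExp a) := by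
  have hsupp : (coeff a).support ⊆ {leadExp a} := fun e he =>
    Finset.mem_singleton.2 <| Prod.ext
      (hinj (by simpa using pow_mul_pow_eq_of_eltDvd_scale hq hq one_ne_zero ha hy he))
      (hinj (by simpa using pow_mul_pow_eq_of_eltDvd_scale hq one_ne_zero hq ha hx he))
  apply coeff_injective
  rw [coeff_smul, coeff_monomial, Finsupp.smul_single, smul_eq_mul, mul_one]
  exact Finsupp.support_subset_singleton.1 hsupp

theorem le_or_le_of_isPrimeElt_smul_monomial (hq : q ≠ 0) {c : F} (hc : c ≠ 0) {u v : ℕ × ℕ}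
    (hp : IsPrimeElt (c • monomial F q (u + v))) : u + v ≤ u ∨ u + v ≤ v := by
  have hdvd : EltDvd (c • monomial F q (u + v)) (monomial F q u * monomial F q v) := by
    refine ⟨algebraMap F _ (c⁻¹ * q ^ (u.2 * v.1)), .inl ?_⟩
    rw [monomial_mul_monomial, ← Algebra.commutes, ← Algebra.smul_def, smul_smul,
      mul_right_comm, inv_mul_cancel₀ hc, one_mul]
  have hlead : leadExp (c • monomial F q (u + v)) = u + v := by
    rw [leadExp_smul hc, leadExp_monomial]
  rcases hp _ _ hdvd with h | h
  · exact .inl (by simpa [hlead, leadExp_monomial] using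
      leadExp_le_of_eltDvd hq h (monomial_ne_zero u))
  · exact .inr (by simpa [hlead, leadExp_monomial] using
      leadExp_le_of_eltDvd hq h (monomial_ne_zero v))

theorem eq_one_zero_or_eq_zero_one_of_isPrimeElt_smul_monomial (hq : q ≠ 0) {c : F} (hc : c ≠ 0)
    {M : ℕ × ℕ} (hM : M ≠ 0) (hp : IsPrimeElt (c • monomial F q M)) : M = (1, 0) ∨ M = (0, 1) :=
  Prod.eq_one_zero_or_eq_zero_one_of_forall_add_eq hM fun u v huv => by
    subst huv
    exact le_or_le_of_isPrimeElt_smul_monomial hq hc hp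

end QPlane

open QPlane in
theorem stmt_10_general (F : Type) [Field F] (q : F) (hq : q ≠ 0)
    (hroot : ∀ n : ℕ, 1 ≤ n → q ^ n ≠ 1)
    (p : QPlane F q) (hnc : ¬ IsConstQP F q p) (hp : IsPrimeElt p) :
    ∃ lam : F, p = lam • Qx F q ∨ p = lam • Qy F q := by
  have hM : leadExp p ≠ 0 := fun h => hnc ⟨_, (eq_algebraMap_of_leadExp_eq_zero h).symm⟩
  have hp0 : p ≠ 0 := by
    rintro rfl
    exact hnc ⟨0, map_zero _⟩
  rcases hp _ _ ⟨Qx F q, .inl (mul_Qx p).symm⟩ with hx | hsx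
  · obtain ⟨c, hc⟩ :=
      exists_eq_smul_of_eltDvd_monomial hq hM (.inl rfl) (by rwa [monomial_one_zero])
    exact ⟨c, .inl (by rwa [monomial_one_zero] at hc)⟩
  rcases hp _ _ ⟨Qy F q, .inr (Qy_mul p).symm⟩ with hsy | hy
  · have hmono := eq_smul_monomial_leadExp_of_eltDvd_scale hq
      (injective_pow_of_pow_ne_one hq hroot) hp0 hsx hsy
    have hc : coeff p (leadExp p) ≠ 0 := Finsupp.mem_support_iff.1 (leadExp_mem_support hp0)
    rw [hmono] at hp
    rcases eq_one_zero_or_eq_zero_one_of_isPrimeElt_smul_monomial hq hc hM hp with h | h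
    · exact ⟨_, .inl (hmono.trans (by rw [h, monomial_one_zero]))⟩
    · exact ⟨_, .inr (hmono.trans (by rw [h, monomial_zero_one]))⟩
  · obtain ⟨c, hc⟩ :=
      exists_eq_smul_of_eltDvd_monomial hq hM (.inr rfl) (by rwa [monomial_zero_one])
    exact ⟨c, .inr (by rwa [monomial_zero_one] at hc)⟩

theorem stmt_10 (F : Type) [Field F] [CharZero F] (q : F) (hq : q ≠ 0)
    (hroot : ∀ n : ℕ, 1 ≤ n → q ^ n ≠ 1)
    (p : QPlane F q) (hnc : ¬ IsConstQP F q p) (hp : IsPrimeElt p) :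
    ∃ lam : F, p = lam • Qx F q ∨ p = lam • Qy F q :=
  stmt_10_general F q hq hroot p hnc hp
end
end

section
/- Let F be a subfield of ℝ, let q ∈ F be nonzero, and let a, b, c ∈ F satisfy b² − 4·a·c·q < 0 (as real numbers). Then the quadratic form f = a·x² + b·x·y + c·y² is irreducible in the quantum plane O_q(F²). -/
noncomputable section

/-- A (nonzero) element is reducible if it is a product of two nonconstant elements. -/
def IsReducibleQP (F : Type) [Field F] (q : F) (f : QPlane F q) : Prop :=
  ∃ g h : QPlane F q, ¬ IsConstQP F q g ∧ ¬ IsConstQP F q h ∧ f = g * h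

/-- An element is irreducible if it is nonconstant and not reducible. -/
def IsIrreducibleQP (F : Type) [Field F] (q : F) (f : QPlane F q) : Prop :=
  ¬ IsConstQP F q f ∧ ¬ IsReducibleQP F q f

/-! The ordered monomials `x ^ i * y ^ j` form a basis of `O_q(F²)`: they span because
`y ^ j * x ^ i = q ^ (i * j) • x ^ i * y ^ j`, and they are independent because the action of
`O_q(F²)` on normal forms sends them, applied to the normal form of `1`, to distinct basis vectors. Ordering exponents by total degree and
then by the degree in `x`, the coefficient of `g * h` at the sum of the leading exponents is the
product of the leading coefficients times a power of `q ≠ 0`, so `deg (g * h) ≥ deg g + deg h`.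
Hence if `f = a x² + b xy + c y²` factors into nonconstant elements, both factors are
`γ + α x + β y` and `γ' + α' x + β' y`, and comparing coefficients of degree two gives
`a = α α'`, `b = α β' + q β α'`, `c = β β'`, so that `Δ_q(f) = (α β' - q β α')²`. A constant `f`
has `a = 0` and `Δ_q(f) = b²`. In either case `Δ_q(f)` is a square, hence not negative in `ℝ`. -/

namespace QuantumPlane

open Module

variable {F : Type} [Field F] (q : F)

theorem Qy_mul_Qx : Qy F q * Qx F q = q • (Qx F q * Qy F q) := by
  simpa [Qx, Qy] using RingQuot.mkAlgHom_rel F (QRel.rel (F := F) (q := q))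

theorem Qy_mul_Qx_pow (i : ℕ) : Qy F q * Qx F q ^ i = q ^ i • (Qx F q ^ i * Qy F q) := by
  induction i with
  | zero => simp
  | succ n ih =>
    rw [pow_succ, ← mul_assoc, ih, smul_mul_assoc, mul_assoc, Qy_mul_Qx, mul_smul_comm,
      smul_smul, ← pow_succ, ← mul_assoc]

theorem Qy_pow_mul_Qx_pow (i j : ℕ) :
    Qy F q ^ j * Qx F q ^ i = q ^ (i * j) • (Qx F q ^ i * Qy F q ^ j) := by
  induction j with
  | zero => simp
  | succ n ih =>
    rw [pow_succ, mul_assoc, Qy_mul_Qx_pow, mul_smul_comm, ← mul_assoc, ih, smul_mul_assoc,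
      smul_smul, ← pow_add, mul_assoc, ← pow_succ, Nat.mul_succ, add_comm i]

def monomial (p : ℕ × ℕ) : QPlane F q := Qx F q ^ p.1 * Qy F q ^ p.2

theorem monomial_mul_monomial (p r : ℕ × ℕ) :
    monomial q p * monomial q r = q ^ (p.2 * r.1) • monomial q (p + r) := by
  rw [monomial, monomial, mul_assoc, ← mul_assoc (Qy F q ^ p.2), Qy_pow_mul_Qx_pow,
    smul_mul_assoc, mul_smul_comm, monomial, Prod.fst_add, Prod.snd_add, pow_add, pow_add,
    mul_comm r.1, mul_assoc, mul_assoc]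

theorem monomial_zero : monomial q 0 = 1 := by simp [monomial]

-- The left action of `x` and `y` on normal forms, with `e (i, j)` standing for `x ^ i * y ^ j`.

def shiftX : ((ℕ × ℕ) →₀ F) →ₗ[F] (ℕ × ℕ) →₀ F :=
  Finsupp.lmapDomain F F fun p => (p.1 + 1, p.2)

def shiftY : ((ℕ × ℕ) →₀ F) →ₗ[F] (ℕ × ℕ) →₀ F :=
  Finsupp.lsum F fun p => q ^ p.1 • Finsupp.lsingle (p.1, p.2 + 1)

variable {q}

@[simp] theorem shiftX_single (p : ℕ × ℕ) (v : F) :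
    shiftX (Finsupp.single p v) = Finsupp.single (p.1 + 1, p.2) v := by
  simp [shiftX]

@[simp] theorem shiftY_single (p : ℕ × ℕ) (v : F) :
    shiftY q (Finsupp.single p v) = q ^ p.1 • Finsupp.single (p.1, p.2 + 1) v := by
  simp [shiftY]

theorem shiftY_mul_shiftX : shiftY q * shiftX = q • (shiftX * shiftY q) := by
  refine Finsupp.lhom_ext fun p v => ?_
  simp only [Module.End.mul_apply, LinearMap.smul_apply, shiftX_single, shiftY_single,
    map_smul, smul_smul, pow_succ']

variable (q) in
def rep : QPlane F q →ₐ[F] Module.End F ((ℕ × ℕ) →₀ F) :=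
  RingQuot.liftAlgHom F ⟨FreeAlgebra.lift F ![shiftX, shiftY q], by
    rintro _ _ ⟨⟩
    simpa using shiftY_mul_shiftX⟩

@[simp] theorem rep_Qx : rep q (Qx F q) = shiftX := by
  simp [rep, Qx]

@[simp] theorem rep_Qy : rep q (Qy F q) = shiftY q := by
  simp [rep, Qy]

theorem rep_monomial_single_zero (p : ℕ × ℕ) :
    rep q (monomial q p) (Finsupp.single 0 1) = Finsupp.single p 1 := by
  have hy (j : ℕ) : (shiftY q ^ j) (Finsupp.single 0 (1 : F)) = Finsupp.single (0, j) 1 := by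
    induction j with
    | zero => rfl
    | succ n ih => rw [pow_succ', Module.End.mul_apply, ih]; simp
  have hx (i j : ℕ) : (shiftX ^ i) (Finsupp.single (0, j) (1 : F)) = Finsupp.single (i, j) 1 := by
    induction i with
    | zero => rfl
    | succ n ih => rw [pow_succ', Module.End.mul_apply, ih]; simp
  simp [monomial, hy, hx]

variable (q)

theorem linearIndependent_monomial : LinearIndependent F (monomial q) := by
  refine LinearIndependent.of_comp
    ((LinearMap.applyₗ (Finsupp.single 0 1)).comp (rep q).toLinearMap) ?_
  convert (Finsupp.basisSingleOne (R := F) (ι := ℕ × ℕ)).linearIndependent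
  ext1 p
  simp [rep_monomial_single_zero]

theorem span_monomial : ⊤ ≤ Submodule.span F (Set.range (monomial q)) := by
  set M := Submodule.span F (Set.range (monomial q))
  have hmul : M * M ≤ M := by
    rw [Submodule.span_mul_span, Submodule.span_le]
    rintro _ ⟨_, ⟨p, rfl⟩, _, ⟨r, rfl⟩, rfl⟩
    change monomial q p * monomial q r ∈ M
    rw [monomial_mul_monomial]
    exact M.smul_mem _ (Submodule.subset_span ⟨_, rfl⟩)
  let A : Subalgebra F (QPlane F q) := Submodule.toSubalgebra M
    (monomial_zero q ▸ Submodule.subset_span ⟨0, rfl⟩)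
    (fun _ _ hu hv => hmul (Submodule.mul_mem_mul hu hv))
  rintro g -
  obtain ⟨w, rfl⟩ := RingQuot.mkAlgHom_surjective F (QRel F q) g
  show _ ∈ A
  induction w using FreeAlgebra.induction with
  | grade0 r => rw [AlgHom.commutes]; exact A.algebraMap_mem r
  | grade1 i =>
    fin_cases i
    · change _ ∈ M
      simpa [monomial, Qx] using (Submodule.subset_span ⟨(1, 0), rfl⟩ : monomial q (1, 0) ∈ M)
    · change _ ∈ M
      simpa [monomial, Qy] using (Submodule.subset_span ⟨(0, 1), rfl⟩ : monomial q (0, 1) ∈ M)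
  | mul u v hu hv => rw [map_mul]; exact A.mul_mem hu hv
  | add u v hu hv => rw [map_add]; exact A.add_mem hu hv

def pbwBasis : Basis (ℕ × ℕ) F (QPlane F q) :=
  Basis.mk (linearIndependent_monomial q) (span_monomial q)

@[simp] theorem pbwBasis_apply (p : ℕ × ℕ) : pbwBasis q p = monomial q p := Basis.mk_apply ..

theorem monomial_one_zero : monomial q (1, 0) = Qx F q := by simp [monomial]

theorem monomial_zero_one : monomial q (0, 1) = Qy F q := by simp [monomial]

@[simp] theorem repr_monomial (p : ℕ × ℕ) :
    (pbwBasis q).repr (monomial q p) = Finsupp.single p 1 := by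
  rw [← pbwBasis_apply, Basis.repr_self]

@[simp] theorem repr_Qx : (pbwBasis q).repr (Qx F q) = Finsupp.single (1, 0) 1 := by
  rw [← monomial_one_zero, repr_monomial]

@[simp] theorem repr_Qy : (pbwBasis q).repr (Qy F q) = Finsupp.single (0, 1) 1 := by
  rw [← monomial_zero_one, repr_monomial]

@[simp] theorem repr_algebraMap (r : F) :
    (pbwBasis q).repr (algebraMap F (QPlane F q) r) = Finsupp.single 0 r := by
  rw [Algebra.algebraMap_eq_smul_one, ← monomial_zero, map_smul, repr_monomial,
    Finsupp.smul_single_one]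

variable {q}

theorem repr_mul (g h : QPlane F q) :
    (pbwBasis q).repr (g * h) = ((pbwBasis q).repr g).sum fun p a =>
      ((pbwBasis q).repr h).sum fun r b => Finsupp.single (p + r) (a * b * q ^ (p.2 * r.1)) := by
  conv_lhs => rw [← (pbwBasis q).linearCombination_repr g,
    ← (pbwBasis q).linearCombination_repr h, Finsupp.linearCombination_apply,
    Finsupp.linearCombination_apply, Finsupp.sum_mul, map_finsuppSum]
  refine Finsupp.sum_congr fun p _ => ?_
  rw [Finsupp.mul_sum, map_finsuppSum]
  refine Finsupp.sum_congr fun r _ => ?_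
  rw [smul_mul_smul_comm, pbwBasis_apply, pbwBasis_apply, monomial_mul_monomial, smul_smul,
    map_smul, repr_monomial, Finsupp.smul_single_one]

def degLex (p : ℕ × ℕ) : ℕ ×ₗ ℕ := toLex (p.1 + p.2, p.1)

theorem eq_and_eq_of_degLex_le {p r P Q : ℕ × ℕ} (hp : degLex p ≤ degLex P)
    (hr : degLex r ≤ degLex Q) (h : p + r = P + Q) : p = P ∧ r = Q := by
  simp only [degLex, Prod.Lex.le_iff, ofLex_toLex] at hp hr
  simp only [Prod.ext_iff, Prod.fst_add, Prod.snd_add] at h ⊢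
  omega

theorem repr_mul_apply_add_of_degLex_le {g h : QPlane F q} {P Q : ℕ × ℕ}
    (hP : ∀ p ∈ ((pbwBasis q).repr g).support, degLex p ≤ degLex P)
    (hQ : ∀ r ∈ ((pbwBasis q).repr h).support, degLex r ≤ degLex Q) :
    (pbwBasis q).repr (g * h) (P + Q) =
      (pbwBasis q).repr g P * (pbwBasis q).repr h Q * q ^ (P.2 * Q.1) := by
  classical
  rw [repr_mul, Finsupp.sum_apply, Finsupp.sum_eq_single P]
  · rw [Finsupp.sum_apply, Finsupp.sum_eq_single Q]
    · exact Finsupp.single_eq_same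
    · intro r hr hrQ
      refine Finsupp.single_eq_of_ne fun e => hrQ ?_
      exact (eq_and_eq_of_degLex_le le_rfl (hQ r (Finsupp.mem_support_iff.2 hr)) e.symm).2
    · simp
  · intro p hp hpP
    rw [Finsupp.sum_apply]
    refine Finset.sum_eq_zero fun r hr => Finsupp.single_eq_of_ne fun e => hpP ?_
    exact (eq_and_eq_of_degLex_le (hP p (Finsupp.mem_support_iff.2 hp)) (hQ r hr) e.symm).1
  · simp

def totalDegree (g : QPlane F q) : ℕ := ((pbwBasis q).repr g).support.sup fun p => p.1 + p.2

theorem exists_degLex_max_of_ne_zero {g : QPlane F q} (hg : g ≠ 0) :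
    ∃ P ∈ ((pbwBasis q).repr g).support,
      (∀ p ∈ ((pbwBasis q).repr g).support, degLex p ≤ degLex P) ∧
        P.1 + P.2 = totalDegree g := by
  obtain ⟨P, hP, hmax⟩ := Finset.exists_max_image _ degLex
    (Finsupp.support_nonempty_iff.2 ((pbwBasis q).repr.map_ne_zero_iff.2 hg))
  refine ⟨P, hP, hmax, le_antisymm (Finset.le_sup (f := fun p => p.1 + p.2) hP) ?_⟩
  refine Finset.sup_le fun p hp => ?_
  have := hmax p hp
  simp only [degLex, Prod.Lex.le_iff, ofLex_toLex] at this
  omega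

theorem add_totalDegree_le_totalDegree_mul (hq : q ≠ 0) {g h : QPlane F q} (hg : g ≠ 0)
    (hh : h ≠ 0) : totalDegree g + totalDegree h ≤ totalDegree (g * h) := by
  obtain ⟨P, hP, hPmax, hPdeg⟩ := exists_degLex_max_of_ne_zero hg
  obtain ⟨Q, hQ, hQmax, hQdeg⟩ := exists_degLex_max_of_ne_zero hh
  have hPQ : P + Q ∈ ((pbwBasis q).repr (g * h)).support := by
    rw [Finsupp.mem_support_iff, repr_mul_apply_add_of_degLex_le hPmax hQmax]
    exact mul_ne_zero (mul_ne_zero (Finsupp.mem_support_iff.1 hP) (Finsupp.mem_support_iff.1 hQ))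
      (pow_ne_zero _ hq)
  have := Finset.le_sup (f := fun p => p.1 + p.2) hPQ
  change (P + Q).1 + (P + Q).2 ≤ totalDegree (g * h) at this
  simp only [Prod.fst_add, Prod.snd_add] at this
  omega

theorem totalDegree_pos {g : QPlane F q} (hg : ¬ IsConstQP F q g) : 0 < totalDegree g := by
  refine Nat.pos_of_ne_zero fun h0 => hg ⟨(pbwBasis q).repr g 0, ?_⟩
  refine (pbwBasis q).repr.injective ?_
  rw [repr_algebraMap, eq_comm, ← Finsupp.support_subset_singleton]
  intro p hp
  have := Finset.le_sup (f := fun p => p.1 + p.2) hp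
  rw [← totalDegree, h0] at this
  simp only [Finset.mem_singleton, Prod.ext_iff, Prod.fst_zero, Prod.snd_zero]
  omega

theorem eq_of_totalDegree_le_one {g : QPlane F q} (hg : totalDegree g ≤ 1) :
    g = algebraMap F _ ((pbwBasis q).repr g 0) + (pbwBasis q).repr g (1, 0) • Qx F q +
      (pbwBasis q).repr g (0, 1) • Qy F q := by
  refine (pbwBasis q).repr.injective (Finsupp.ext fun p => ?_)
  by_cases hp : p.1 + p.2 ≤ 1
  · obtain ⟨i, j⟩ := p
    obtain ⟨rfl, rfl⟩ | ⟨rfl, rfl⟩ | ⟨rfl, rfl⟩ : (i = 0 ∧ j = 0) ∨ (i = 1 ∧ j = 0) ∨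
      (i = 0 ∧ j = 1) := by omega
    all_goals simp [← Prod.mk_zero_zero]
  · have hp0 : (pbwBasis q).repr g p = 0 := by
      by_contra hne
      exact hp ((Finset.le_sup (f := fun p => p.1 + p.2) (Finsupp.mem_support_iff.2 hne)).trans hg)
    rw [hp0]
    simp only [map_add, map_smul, repr_algebraMap, repr_Qx, repr_Qy, Finsupp.coe_add,
      Finsupp.coe_smul, Pi.add_apply, Pi.smul_apply, Finsupp.single_apply, Prod.ext_iff,
      Prod.fst_zero, Prod.snd_zero]
    rw [if_neg (by omega), if_neg (by omega), if_neg (by omega)]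
    simp

variable (q) in
def quadForm (a b c : F) : QPlane F q :=
  a • (Qx F q ^ 2) + b • (Qx F q * Qy F q) + c • (Qy F q ^ 2)

theorem repr_quadForm (a b c : F) : (pbwBasis q).repr (quadForm q a b c) =
    Finsupp.single (2, 0) a + Finsupp.single (1, 1) b + Finsupp.single (0, 2) c := by
  have hx2 : Qx F q ^ 2 = monomial q (2, 0) := by simp [monomial]
  have hxy : Qx F q * Qy F q = monomial q (1, 1) := by simp [monomial]
  have hy2 : Qy F q ^ 2 = monomial q (0, 2) := by simp [monomial]
  simp [quadForm, hx2, hxy, hy2]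

theorem totalDegree_quadForm_le (a b c : F) : totalDegree (quadForm q a b c) ≤ 2 := by
  refine Finset.sup_le fun p hp => ?_
  by_contra hp2
  refine Finsupp.mem_support_iff.1 hp ?_
  rw [repr_quadForm]
  simp only [Finsupp.coe_add, Pi.add_apply, Finsupp.single_apply, Prod.ext_iff]
  rw [if_neg (by omega), if_neg (by omega), if_neg (by omega)]
  simp

theorem linear_mul_linear (γ α β γ' α' β' : F) :
    (algebraMap F _ γ + α • Qx F q + β • Qy F q) *
        (algebraMap F _ γ' + α' • Qx F q + β' • Qy F q) =
      algebraMap F _ (γ * γ') + (γ * α' + α * γ') • Qx F q + (γ * β' + β * γ') • Qy F q +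
        quadForm q (α * α') (α * β' + q * β * α') (β * β') := by
  simp only [quadForm, Algebra.algebraMap_eq_smul_one, add_mul, mul_add, smul_mul_smul_comm,
    one_mul, mul_one, Qy_mul_Qx, smul_smul, sq]
  module

theorem coeffs_eq_of_quadForm_eq {a b c γ α β a' b' c' : F}
    (h : quadForm q a b c =
      algebraMap F _ γ + α • Qx F q + β • Qy F q + quadForm q a' b' c') :
    a = a' ∧ b = b' ∧ c = c' := by
  have hcoeff (p : ℕ × ℕ) := congr($(congrArg (pbwBasis q).repr h) p)
  refine ⟨?_, ?_, ?_⟩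
  · simpa [repr_quadForm, ← Prod.mk_zero_zero] using hcoeff (2, 0)
  · simpa [repr_quadForm, ← Prod.mk_zero_zero] using hcoeff (1, 1)
  · simpa [repr_quadForm, ← Prod.mk_zero_zero] using hcoeff (0, 2)

variable (q) in
def qDiscr (a b c : F) : F := b ^ 2 - 4 * a * c * q

theorem isSquare_qDiscr_of_quadForm_eq_mul (hq : q ≠ 0) {a b c : F} {g h : QPlane F q}
    (hg : ¬ IsConstQP F q g) (hh : ¬ IsConstQP F q h) (hgh : quadForm q a b c = g * h) :
    IsSquare (qDiscr q a b c) := by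
  have hg0 : g ≠ 0 := fun h0 => hg ⟨0, by rw [h0, map_zero]⟩
  have hh0 : h ≠ 0 := fun h0 => hh ⟨0, by rw [h0, map_zero]⟩
  have hdeg := (add_totalDegree_le_totalDegree_mul hq hg0 hh0).trans
    (hgh ▸ totalDegree_quadForm_le a b c)
  have hg1 := totalDegree_pos hg
  have hh1 := totalDegree_pos hh
  rw [eq_of_totalDegree_le_one (g := g) (by omega), eq_of_totalDegree_le_one (g := h) (by omega),
    linear_mul_linear] at hgh
  set α := (pbwBasis q).repr g (1, 0)
  set β := (pbwBasis q).repr g (0, 1)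
  set α' := (pbwBasis q).repr h (1, 0)
  set β' := (pbwBasis q).repr h (0, 1)
  obtain ⟨rfl, rfl, rfl⟩ := coeffs_eq_of_quadForm_eq hgh
  exact ⟨α * β' - q * β * α', by rw [qDiscr]; ring⟩

theorem isSquare_qDiscr_of_not_isIrreducible (hq : q ≠ 0) {a b c : F}
    (hf : ¬ IsIrreducibleQP F q (quadForm q a b c)) : IsSquare (qDiscr q a b c) := by
  rw [IsIrreducibleQP, not_and_or, not_not, not_not] at hf
  rcases hf with ⟨r, hr⟩ | ⟨g, h, hg, hh, hgh⟩
  · have hr' : quadForm q a b c =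
        algebraMap F _ r + 0 • Qx F q + 0 • Qy F q + quadForm q 0 0 0 := by
      simp [hr, quadForm]
    obtain ⟨rfl, -, -⟩ := coeffs_eq_of_quadForm_eq hr'
    exact ⟨b, by rw [qDiscr]; ring⟩
  · exact isSquare_qDiscr_of_quadForm_eq_mul hq hg hh hgh

end QuantumPlane

theorem stmt_13 (F : Subfield ℝ) (q a b c : F) (hq : q ≠ 0)
    (hdisc : (b : ℝ) ^ 2 - 4 * (a : ℝ) * (c : ℝ) * (q : ℝ) < 0) :
    IsIrreducibleQP F q
      (a • (Qx F q ^ 2) + b • (Qx F q * Qy F q) + c • (Qy F q ^ 2)) := by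
  by_contra hf
  obtain ⟨d, hd⟩ := QuantumPlane.isSquare_qDiscr_of_not_isIrreducible hq hf
  have hdR : (b : ℝ) ^ 2 - 4 * (a : ℝ) * (c : ℝ) * (q : ℝ) = (d : ℝ) * (d : ℝ) := by
    simpa only [QuantumPlane.qDiscr, map_sub, map_mul, map_pow, map_ofNat, Subfield.coe_subtype]
      using congrArg F.subtype hd
  nlinarith [mul_self_nonneg (d : ℝ)]
end
end
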